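/- Let P be a finite poset with n elements, x a minimal element of P, and b ≥ 0 an integer. Let R = C_b <_x P, where C_b is a b-element chain and <_x is the hybrid sum. Then x is a minimal element of R, e(R) = e(P) + b·e(P−x), e(R−x) = e(P−x), |R| = n + b, and width(R) ≤ max{width(P), 2}. -/

import Mathlib

/-- The number of linear extensions of the finite poset `(α, O)`. -/
noncomputable def eCount (α : Type) [Fintype α] (O : PartialOrder α) : ℕ :=
  Nat.card {f : α ≃ Fin (Fintype.card α) // ∀ a b : α, O.le a b → f a ≤ f b}

/-- The induced order on `P − x`. -/
def delOrder {α : Type} (O : PartialOrder α) (x : α) : PartialOrder {a : α // a ≠ x} where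
  le a b := O.le a.1 b.1
  lt a b := O.le a.1 b.1 ∧ ¬ O.le b.1 a.1
  lt_iff_le_not_ge := fun _ _ => Iff.rfl
  le_refl a := O.le_refl a.1
  le_trans a b c := O.le_trans a.1 b.1 c.1
  le_antisymm a b h h' := Subtype.ext (O.le_antisymm a.1 b.1 h h')

/-- The number of linear extensions of `P − x`. -/
noncomputable def eDel (α : Type) [Fintype α] [DecidableEq α] (O : PartialOrder α) (x : α) : ℕ :=
  eCount {a : α // a ≠ x} (delOrder O x)

/-- `x` is a minimal element of the poset `(α, O)`. -/
def isMinimal {α : Type} (O : PartialOrder α) (x : α) : Prop :=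
  ∀ a : α, O.le a x → a = x

/-- The width of a finite poset: the maximal size of an antichain. -/
noncomputable def pwidth (α : Type) [Fintype α] (O : PartialOrder α) : ℕ :=
  sSup {n : ℕ | ∃ s : Finset α,
    (∀ a ∈ s, ∀ b ∈ s, a ≠ b → ¬ O.le a b) ∧ s.card = n}

/-- The underlying relation of the linear (ordinal) sum `P <| Q`:
elements of `α` are below all elements of `β`. -/
def linLE {α β : Type} (O : PartialOrder α) (O' : PartialOrder β) :
    α ⊕ β → α ⊕ β → Prop
  | .inl a, .inl a' => O.le a a'
  | .inr b, .inr b' => O'.le b b'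
  | .inl _, .inr _ => True
  | .inr _, .inl _ => False

/-- The linear (ordinal) sum `P <| Q`. -/
def linOrder {α β : Type} (O : PartialOrder α) (O' : PartialOrder β) :
    PartialOrder (α ⊕ β) where
  le := linLE O O'
  lt a b := linLE O O' a b ∧ ¬ linLE O O' b a
  lt_iff_le_not_ge := fun _ _ => Iff.rfl
  le_refl := by
    rintro (a | b)
    · exact O.le_refl a
    · exact O'.le_refl b
  le_trans := by
    rintro (a | a) (b | b) (c | c) h h' <;>
      first
        | exact h.elim
        | exact h'.elim
        | trivial
        | exact O.le_trans _ _ _ h h'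
        | exact O'.le_trans _ _ _ h h'
  le_antisymm := by
    rintro (a | a) (b | b) h h' <;>
      first
        | exact h.elim
        | exact h'.elim
        | exact congrArg Sum.inl (O.le_antisymm _ _ h h')
        | exact congrArg Sum.inr (O'.le_antisymm _ _ h h')

/-- The relation of the parallel (disjoint) sum `P ⊕ Q`. -/
def parLE {α β : Type} (O : PartialOrder α) (O' : PartialOrder β) :
    α ⊕ β → α ⊕ β → Prop
  | .inl a, .inl a' => O.le a a'
  | .inr b, .inr b' => O'.le b b'
  | .inl _, .inr _ => False
  | .inr _, .inl _ => False

/-- The parallel (disjoint) sum `P ⊕ Q`. -/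
def parOrder {α β : Type} (O : PartialOrder α) (O' : PartialOrder β) :
    PartialOrder (α ⊕ β) where
  le := parLE O O'
  lt a b := parLE O O' a b ∧ ¬ parLE O O' b a
  lt_iff_le_not_ge := fun _ _ => Iff.rfl
  le_refl := by
    rintro (a | b)
    · exact O.le_refl a
    · exact O'.le_refl b
  le_trans := by
    rintro (a | a) (b | b) (c | c) h h' <;>
      first
        | exact h.elim
        | exact h'.elim
        | exact O.le_trans _ _ _ h h'
        | exact O'.le_trans _ _ _ h h'
  le_antisymm := by
    rintro (a | a) (b | b) h h' <;>
      first
        | exact h.elim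
        | exact h'.elim
        | exact congrArg Sum.inl (O.le_antisymm _ _ h h')
        | exact congrArg Sum.inr (O'.le_antisymm _ _ h h')

/-- The dual order. -/
def dualOrder {α : Type} (O : PartialOrder α) : PartialOrder α where
  le a b := O.le b a
  lt a b := O.le b a ∧ ¬ O.le a b
  lt_iff_le_not_ge := fun _ _ => Iff.rfl
  le_refl a := O.le_refl a
  le_trans a b c h h' := O.le_trans c b a h' h
  le_antisymm a b h h' := O.le_antisymm a b h' h

/-- The relation of the hybrid sum `Q <_x P`, where `P` lives on `α` (the `inl`
component), `Q` lives on `β` (the `inr` component), and `x : α` is a (minimal)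
element of `P`: every element of `Q` is below every element of `P` except `x`,
and `x` is incomparable to all of `Q`.  (For `x` minimal, `¬ a ≤ x ↔ a ≠ x`.) -/
def hybLE {α β : Type} (O : PartialOrder α) (O' : PartialOrder β) (x : α) :
    α ⊕ β → α ⊕ β → Prop
  | .inl a, .inl a' => O.le a a'
  | .inr b, .inr b' => O'.le b b'
  | .inr _, .inl a => ¬ O.le a x
  | .inl _, .inr _ => False

/-- The hybrid sum `Q <_x P`. -/
def hybOrder {α β : Type} (O : PartialOrder α) (O' : PartialOrder β) (x : α) :
    PartialOrder (α ⊕ β) where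
  le := hybLE O O' x
  lt a b := hybLE O O' x a b ∧ ¬ hybLE O O' x b a
  lt_iff_le_not_ge := fun _ _ => Iff.rfl
  le_refl := by
    rintro (a | b)
    · exact O.le_refl a
    · exact O'.le_refl b
  le_trans := by
    rintro (a | a) (b | b) (c | c) h h' <;>
      first
        | exact h.elim
        | exact h'.elim
        | exact h'
        | exact O.le_trans _ _ _ h h'
        | exact O'.le_trans _ _ _ h h'
        | exact fun hc => h (O.le_trans _ _ _ h' hc)
  le_antisymm := by
    rintro (a | a) (b | b) h h' <;>
      first
        | exact h.elim
        | exact h'.elim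
        | exact congrArg Sum.inl (O.le_antisymm _ _ h h')
        | exact congrArg Sum.inr (O'.le_antisymm _ _ h h')

/-- The carrier of the flip-flop poset built from `P` on `α` (with `x` removed),
`Q` on `β` (with `y` removed), and the two extra elements `z = Sum.inr false`
and `v = Sum.inr true`. -/
abbrev FlipCarrier (α β : Type) (x : α) (y : β) : Type :=
  ({a : α // a ≠ x} ⊕ {b : β // b ≠ y}) ⊕ Bool

/-- The relation of the flip-flop poset: the dual order on `P − x`, the order on
`Q − y`; `p ≺ z` for `p` with `x ≺ p` in `P`; `z ≺ q` for `q` with `y ≺ q` in `Q`;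
`p ≺ v ≺ q` for all `p ∈ P − x`, `q ∈ Q − y`; and `z, v` incomparable. -/
def ffLE {α β : Type} (O : PartialOrder α) (O' : PartialOrder β) (x : α) (y : β) :
    FlipCarrier α β x y → FlipCarrier α β x y → Prop
  | .inl (.inl p), .inl (.inl p') => O.le p'.1 p.1
  | .inl (.inr q), .inl (.inr q') => O'.le q.1 q'.1
  | .inl (.inl _), .inl (.inr _) => True
  | .inl (.inr _), .inl (.inl _) => False
  | .inl (.inl _), .inr true => True
  | .inl (.inl p), .inr false => O.le x p.1
  | .inr true, .inl (.inr _) => True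
  | .inr false, .inl (.inr q) => O'.le y q.1
  | .inl (.inr _), .inr _ => False
  | .inr _, .inl (.inl _) => False
  | .inr c, .inr c' => c = c'

/-- The flip-flop poset. -/
def ffOrder {α β : Type} (O : PartialOrder α) (O' : PartialOrder β) (x : α) (y : β) :
    PartialOrder (FlipCarrier α β x y) where
  le := ffLE O O' x y
  lt a b := ffLE O O' x y a b ∧ ¬ ffLE O O' x y b a
  lt_iff_le_not_ge := fun _ _ => Iff.rfl
  le_refl := by
    rintro ((p | q) | (_ | _)) <;>
      first
        | exact O.le_refl _
        | exact O'.le_refl _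
        | rfl
  le_trans := by
    rintro ((p | q) | (_ | _)) ((p' | q') | (_ | _)) ((p'' | q'') | (_ | _)) h h' <;>
      first
        | trivial
        | exact h.elim
        | exact h'.elim
        | exact O.le_trans _ _ _ h' h
        | exact O'.le_trans _ _ _ h h'
        | exact O.le_trans _ _ _ h h'
        | exact O'.le_trans _ _ _ h' h
        | simp_all
  le_antisymm := by
    rintro ((p | q) | (_ | _)) ((p' | q') | (_ | _)) h h' <;>
      first
        | exact h.elim
        | exact h'.elim
        | rfl
        | exact congrArg (fun t => Sum.inl (Sum.inl t)) (Subtype.ext (O.le_antisymm _ _ h' h))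
        | exact congrArg (fun t => Sum.inl (Sum.inr t)) (Subtype.ext (O'.le_antisymm _ _ h h'))
        | exact Bool.noConfusion h
        | simp_all

/-- The value of the simple continued fraction `[b₀; b₁, …, b_m]`. -/
def cfVal : List ℕ → ℚ
  | [] => 0
  | [b] => (b : ℚ)
  | b :: l => (b : ℚ) + (cfVal l)⁻¹

/-- `l = [b₀, b₁, …, b_m]` is an admissible simple continued fraction expansion:
nonempty, `b₁, …, b_m ≥ 1`, and the last quotient is `≥ 2` when `m ≥ 1`.
(Such an expansion exists and is unique for every nonnegative rational.) -/
def cfAdmissible (l : List ℕ) : Prop :=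
  l ≠ [] ∧ (∀ i : Fin l.length, 0 < i.1 → 1 ≤ l.get i) ∧
    (2 ≤ l.length → ∀ b ∈ l.getLast?, 2 ≤ b)

/-- `gcfAux a b m k` is the value of the tail
`[a_{i+1}, …, a_m ; b_i, …, b_m]` of the generalized continued fraction, where
`i = m - k`; thus `gcfAux a b m m = b₀ + a₁/(b₁ + a₂/(b₂ + ⋯ + a_m/b_m))`. -/
def gcfAux (a b : ℕ → ℕ) (m : ℕ) : ℕ → ℚ
  | 0 => (b m : ℚ)
  | k + 1 => (b (m - (k + 1)) : ℚ) + (a (m - k) : ℚ) / gcfAux a b m k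

/-- The numerators `C_i` of the generalized continued fraction, indexed so that
`gcfC a b m k = C_{m-k}`: they satisfy `C_m = b_m`, `D_m = 1`, `D_i = C_{i+1}`,
`C_i = b_i D_i + a_{i+1} D_{i+1}`. -/
def gcfC (a b : ℕ → ℕ) (m : ℕ) : ℕ → ℕ
  | 0 => b m
  | 1 => b (m - 1) * b m + a m
  | k + 2 => b (m - (k + 2)) * gcfC a b m (k + 1) + a (m - (k + 1)) * gcfC a b m k

/-- The denominators `D_i`, indexed so that `gcfD a b m k = D_{m-k}`. -/
def gcfD (a b : ℕ → ℕ) (m : ℕ) : ℕ → ℕ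
  | 0 => 1
  | k + 1 => gcfC a b m k


section Aux

open Sum

/-- `eCount` is invariant under order isomorphism. -/
lemma eCount_congr {γ δ : Type} [Fintype γ] [Fintype δ]
    (O : PartialOrder γ) (O' : PartialOrder δ) (e : γ ≃ δ)
    (he : ∀ a b : γ, O.le a b ↔ O'.le (e a) (e b)) :
    eCount γ O = eCount δ O' := by
  have hc : Fintype.card γ = Fintype.card δ := Fintype.card_congr e
  apply Nat.card_congr
  refine ⟨fun f => ⟨(e.symm.trans f.1).trans (finCongr hc), ?_⟩,
          fun g => ⟨(e.trans g.1).trans (finCongr hc.symm), ?_⟩, ?_, ?_⟩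
  · intro a b h
    have h1 : O.le (e.symm a) (e.symm b) := by
      rw [he (e.symm a) (e.symm b), e.apply_symm_apply, e.apply_symm_apply]; exact h
    have h2 := f.2 _ _ h1
    simp only [Equiv.trans_apply, finCongr_apply, Fin.le_def, Fin.coe_cast]
    exact h2
  · intro a b h
    have h2 := g.2 _ _ ((he a b).mp h)
    simp only [Equiv.trans_apply, finCongr_apply, Fin.le_def, Fin.coe_cast]
    exact h2
  · intro f
    apply Subtype.ext; apply Equiv.ext; intro a
    simp only [Equiv.trans_apply, finCongr_apply, Equiv.symm_apply_apply, Fin.cast_cast,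
      Fin.cast_eq_self]
  · intro g
    apply Subtype.ext; apply Equiv.ext; intro a
    simp only [Equiv.trans_apply, finCongr_apply, Equiv.apply_symm_apply, Fin.cast_cast,
      Fin.cast_eq_self]

set_option maxHeartbeats 1600000 in
/-- The central lemma: mono bijections sending `z` to the bottom are counted by `eDel`. -/
lemma card_bot_eq_eDel {γ : Type} [Fintype γ] [DecidableEq γ]
    (O : PartialOrder γ) (z : γ) (hz : isMinimal O z) :
    Nat.card {f : γ ≃ Fin (Fintype.card γ) //
        (∀ a b : γ, O.le a b → f a ≤ f b) ∧ ∀ a : γ, f z ≤ f a} = eDel γ O z := by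
  classical
  have hpos : 0 < Fintype.card γ := Fintype.card_pos_iff.mpr ⟨z⟩
  have hmk : Fintype.card γ = Fintype.card {a : γ // a ≠ z} + 1 := by
    have : Fintype.card {a : γ // a ≠ z} = Fintype.card γ - 1 := by
      simp [Fintype.card_subtype_compl]
    omega
  have key : ∀ (f : γ ≃ Fin (Fintype.card γ)), (∀ a : γ, f z ≤ f a) → (f z).val = 0 := by
    intro f hf
    have h1 := hf (f.symm ⟨0, hpos⟩)
    rw [f.apply_symm_apply] at h1
    exact Nat.le_zero.mp h1
  refine Nat.card_congr ?_
  refine { toFun := ?_, invFun := ?_, left_inv := ?_, right_inv := ?_ }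
  · rintro ⟨f, hmono, hbot⟩
    have hz0 : (f z).val = 0 := key f hbot
    have hne0 : ∀ a : γ, a ≠ z → (f a).val ≠ 0 := by
      intro a ha h0
      exact ha (f.injective (Fin.ext (h0.trans hz0.symm)))
    refine ⟨⟨fun a => ⟨(f a.1).val - 1, by
        have h1 := (f a.1).isLt
        have h2 := hne0 a.1 a.2
        omega⟩,
      fun i => ⟨f.symm ⟨i.val + 1, by have := i.isLt; omega⟩, by
        intro h
        have h3 := congrArg f h
        rw [f.apply_symm_apply] at h3
        have h2 := congrArg Fin.val h3.symm
        rw [hz0] at h2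
        simp at h2⟩,
      ?_, ?_⟩, ?_⟩
    · intro a
      apply Subtype.ext
      have h2 := hne0 a.1 a.2
      have : (⟨(f a.1).val - 1 + 1, by have := (f a.1).isLt; omega⟩ : Fin (Fintype.card γ)) = f a.1 := by
        apply Fin.ext; simp; omega
      simp only [this, f.symm_apply_apply]
    · intro i
      apply Fin.ext
      simp only [f.apply_symm_apply]
      omega
    · intro a b h
      have h1 := hmono a.1 b.1 h
      dsimp only [Equiv.coe_fn_mk]
      simp only [Fin.mk_le_mk]
      rw [Fin.le_def] at h1
      omega
  · rintro ⟨g, hg⟩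
    refine ⟨⟨fun a => if h : a = z then ⟨0, hpos⟩ else
        ⟨(g ⟨a, h⟩).val + 1, by have := (g ⟨a, h⟩).isLt; omega⟩,
      fun i => if h : i.val = 0 then z else (g.symm ⟨i.val - 1, by have := i.isLt; omega⟩).1,
      ?_, ?_⟩, ?_, ?_⟩
    · intro a
      dsimp only [Equiv.coe_fn_mk]
      by_cases h : a = z
      · subst h; simp
      · simp only [dif_neg h]
        rw [dif_neg (by omega : ¬ ((g ⟨a, h⟩).val + 1 = 0))]
        have : (⟨(g ⟨a, h⟩).val + 1 - 1, by have := (g ⟨a, h⟩).isLt; omega⟩ : Fin (Fintype.card {a : γ // a ≠ z})) = g ⟨a, h⟩ := by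
          apply Fin.ext; simp
        rw [this, g.symm_apply_apply]
    · intro i
      dsimp only [Equiv.coe_fn_mk]
      by_cases h : i.val = 0
      · rw [dif_pos h, dif_pos rfl]
        apply Fin.ext; simp [h]
      · rw [dif_neg h]
        rw [dif_neg (g.symm ⟨i.val - 1, by have := i.isLt; omega⟩).2]
        apply Fin.ext
        have : (⟨((g.symm ⟨i.val - 1, by have := i.isLt; omega⟩).1 : γ), (g.symm ⟨i.val - 1, by have := i.isLt; omega⟩).2⟩ : {a : γ // a ≠ z}) = g.symm ⟨i.val - 1, by have := i.isLt; omega⟩ := rfl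
        simp only [Fin.val_mk]; rw [this, g.apply_symm_apply]
        simp; omega
    · intro a b hab
      dsimp only [Equiv.coe_fn_mk]
      by_cases ha : a = z
      · subst ha
        rw [dif_pos rfl]
        exact Nat.zero_le _
      · have hb : b ≠ z := fun hb => ha (hz a (hb ▸ hab))
        rw [dif_neg ha, dif_neg hb]
        have := hg ⟨a, ha⟩ ⟨b, hb⟩ hab
        simp only [Fin.mk_le_mk]
        have h2 : (g ⟨a, ha⟩).val ≤ (g ⟨b, hb⟩).val := this
        omega
    · intro a
      dsimp only [Equiv.coe_fn_mk]
      rw [dif_pos rfl]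
      exact Nat.zero_le _
  · rintro ⟨f, hmono, hbot⟩
    have hz0 : (f z).val = 0 := key f hbot
    apply Subtype.ext
    apply Equiv.ext
    intro a
    dsimp only [Equiv.coe_fn_mk]
    by_cases h : a = z
    · subst h
      simp only [dif_pos rfl]
      exact (Fin.ext hz0.symm)
    · simp only [dif_neg h]
      apply Fin.ext
      have hne0 : (f a).val ≠ 0 := by
        intro h0
        exact h (f.injective (Fin.ext (h0.trans hz0.symm)))
      simp only [Fin.val_mk]
      omega
  · rintro ⟨g, hg⟩
    apply Subtype.ext
    apply Equiv.ext
    intro a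
    dsimp only [Equiv.coe_fn_mk]
    apply Fin.ext
    simp only [dif_neg a.2]
    simp

/-- If `z` is a bottom element, `eCount = eDel z`. -/
lemma eCount_eq_eDel_of_bot {γ : Type} [Fintype γ] [DecidableEq γ]
    (O : PartialOrder γ) (z : γ) (hbot : ∀ a : γ, O.le z a) :
    eCount γ O = eDel γ O z := by
  have hz : isMinimal O z := fun a ha => O.le_antisymm a z ha (hbot a)
  rw [← card_bot_eq_eDel O z hz]
  apply Nat.card_congr
  exact Equiv.subtypeEquivRight
    (fun f => ⟨fun hm => ⟨hm, fun a => hm z a (hbot a)⟩, fun h => h.1⟩)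

/-- If `z₁ ≠ z₂` are minimal and every element is above one of them,
`eCount = eDel z₁ + eDel z₂`. -/
lemma eCount_eq_eDel_add_eDel {γ : Type} [Fintype γ] [DecidableEq γ]
    (O : PartialOrder γ) (z₁ z₂ : γ) (hne : z₁ ≠ z₂)
    (h₁ : isMinimal O z₁) (h₂ : isMinimal O z₂)
    (hdi : ∀ a : γ, O.le z₁ a ∨ O.le z₂ a) :
    eCount γ O = eDel γ O z₁ + eDel γ O z₂ := by
  classical
  have hpos : 0 < Fintype.card γ := Fintype.card_pos_iff.mpr ⟨z₁⟩
  have hdich : ∀ f : γ ≃ Fin (Fintype.card γ), (∀ a b : γ, O.le a b → f a ≤ f b) →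
      (¬ (∀ a : γ, f z₁ ≤ f a) ↔ (∀ a : γ, f z₂ ≤ f a)) := by
    intro f hf
    constructor
    · intro h1
      have hw : ∀ a : γ, f (f.symm ⟨0, hpos⟩) ≤ f a := by
        intro a
        rw [f.apply_symm_apply, Fin.le_def]
        exact Nat.zero_le _
      rcases hdi (f.symm ⟨0, hpos⟩) with h | h
      · exact absurd (fun a => le_trans (hf _ _ h) (hw a)) h1
      · exact fun a => le_trans (hf _ _ h) (hw a)
    · intro h2 h1
      have e1 : f z₁ ≤ f z₂ := h1 z₂
      have e2 : f z₂ ≤ f z₁ := h2 z₁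
      exact hne (f.injective (le_antisymm e1 e2))
  rw [← card_bot_eq_eDel O z₁ h₁, ← card_bot_eq_eDel O z₂ h₂]
  unfold eCount
  set mono : (γ ≃ Fin (Fintype.card γ)) → Prop :=
    fun f => ∀ a b : γ, O.le a b → f a ≤ f b with hmono
  set p : {f : γ ≃ Fin (Fintype.card γ) // mono f} → Prop :=
    fun F => ∀ a : γ, F.1 z₁ ≤ F.1 a with hp
  have e0 : {f : γ ≃ Fin (Fintype.card γ) // mono f} ≃
      {F : {f : γ ≃ Fin (Fintype.card γ) // mono f} // p F} ⊕
      {F : {f : γ ≃ Fin (Fintype.card γ) // mono f} // ¬ p F} :=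
    (Equiv.sumCompl p).symm
  rw [Nat.card_congr e0, Nat.card_sum]
  congr 1
  · apply Nat.card_congr
    exact (Equiv.subtypeSubtypeEquivSubtypeInter mono
      (fun f => ∀ a : γ, f z₁ ≤ f a))
  · apply Nat.card_congr
    refine Equiv.trans ?_ (Equiv.subtypeSubtypeEquivSubtypeInter mono
      (fun f => ∀ a : γ, f z₂ ≤ f a))
    exact Equiv.subtypeEquivRight (fun F => hdich F.1 F.2)

/-- Removing the bottom of the chain `Fin (b+1)` inside a sum. -/
def chainShift {β : Type} (b : ℕ) :
    {c : Fin (b + 1) ⊕ β // c ≠ Sum.inl 0} ≃ Fin b ⊕ β where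
  toFun c := match c with
    | ⟨.inl i, h⟩ => .inl (i.pred (fun h0 => h (congrArg Sum.inl h0)))
    | ⟨.inr q, _⟩ => .inr q
  invFun c := match c with
    | .inl i => ⟨.inl i.succ, by simp [Fin.succ_ne_zero]⟩
    | .inr q => ⟨.inr q, by simp⟩
  left_inv := by rintro ⟨(i | q), h⟩ <;> simp
  right_inv := by rintro (i | q) <;> simp

/-- Putting a chain below a poset does not change the number of linear extensions. -/
lemma eCount_lin_chain {β : Type} [Fintype β] [DecidableEq β]
    (O' : PartialOrder β) (b : ℕ) :
    eCount (Fin b ⊕ β) (linOrder (inferInstance : PartialOrder (Fin b)) O') =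
      eCount β O' := by
  induction b with
  | zero =>
    apply eCount_congr _ _ (Equiv.emptySum (Fin 0) β)
    rintro (a | a) (c | c)
    · exact a.elim0
    · exact a.elim0
    · exact c.elim0
    · exact Iff.rfl
  | succ b ih =>
    have hbot : ∀ c : Fin (b + 1) ⊕ β,
        (linOrder (inferInstance : PartialOrder (Fin (b + 1))) O').le (Sum.inl 0) c := by
      rintro (i | q)
      · exact Fin.zero_le i
      · trivial
    rw [eCount_eq_eDel_of_bot _ (Sum.inl 0) hbot, ← ih]
    unfold eDel
    apply eCount_congr _ _ (chainShift b)
    rintro ⟨(i | q), hc⟩ ⟨(j | p), hd⟩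
    · simp only [chainShift, Equiv.coe_fn_mk]
      exact Fin.pred_le_pred_iff.symm
    · exact Iff.rfl
    · exact Iff.rfl
    · exact Iff.rfl

/-- Removing `x` from the hybrid sum gives `C_b` linearly below `P − x`. -/
def hybDelXEquiv {α : Type} (b : ℕ) (x : α) :
    {c : α ⊕ Fin b // c ≠ Sum.inl x} ≃ Fin b ⊕ {a : α // a ≠ x} where
  toFun c := match c with
    | ⟨.inl a, h⟩ => .inr ⟨a, fun e => h (congrArg Sum.inl e)⟩
    | ⟨.inr i, _⟩ => .inl i
  invFun c := match c with
    | .inl i => ⟨.inr i, by simp⟩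
    | .inr a => ⟨.inl a.1, by simp [a.2]⟩
  left_inv := by rintro ⟨(a | i), h⟩ <;> simp
  right_inv := by rintro (i | a) <;> simp

/-- Removing the bottom chain element from the hybrid sum. -/
def hybDelBotEquiv {α : Type} (b : ℕ) (x : α) :
    {c : α ⊕ Fin (b + 1) // c ≠ Sum.inr 0} ≃ α ⊕ Fin b where
  toFun c := match c with
    | ⟨.inl a, _⟩ => .inl a
    | ⟨.inr i, h⟩ => .inr (i.pred (fun h0 => h (congrArg Sum.inr h0)))
  invFun c := match c with
    | .inl a => ⟨.inl a, by simp⟩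
    | .inr i => ⟨.inr i.succ, by simp [Fin.succ_ne_zero]⟩
  left_inv := by rintro ⟨(a | i), h⟩ <;> simp
  right_inv := by rintro (a | i) <;> simp

end Aux

/-- For `R = C_b <_x P` (hybrid sum with a `b`-element chain, `x` minimal in `P`):
`x` is minimal in `R`, `e(R) = e(P) + b·e(P−x)`, `e(R−x) = e(P−x)`,
`|R| = n + b`, and `width(R) ≤ max {width(P), 2}`. -/
theorem hybrid_chain_sum (α : Type) [Fintype α] [DecidableEq α] (b : ℕ)
    (O : PartialOrder α) (x : α) (hx : isMinimal O x) :
    isMinimal (hybOrder O (inferInstance : PartialOrder (Fin b)) x) (Sum.inl x) ∧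
      eCount (α ⊕ Fin b) (hybOrder O (inferInstance : PartialOrder (Fin b)) x) =
        eCount α O + b * eDel α O x ∧
      eDel (α ⊕ Fin b) (hybOrder O (inferInstance : PartialOrder (Fin b)) x)
          (Sum.inl x) = eDel α O x ∧
      Fintype.card (α ⊕ Fin b) = Fintype.card α + b ∧
      pwidth (α ⊕ Fin b) (hybOrder O (inferInstance : PartialOrder (Fin b)) x) ≤
        max (pwidth α O) 2 := by
  classical
  have hminl : ∀ (m : ℕ),
      isMinimal (hybOrder O (inferInstance : PartialOrder (Fin m)) x) (Sum.inl x) := by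
    intro m
    rintro (a | c) h
    · exact congrArg Sum.inl (hx a h)
    · exact absurd (O.le_refl x) h
  have hdelx : ∀ (m : ℕ),
      eDel (α ⊕ Fin m) (hybOrder O (inferInstance : PartialOrder (Fin m)) x)
        (Sum.inl x) = eDel α O x := by
    intro m
    unfold eDel
    rw [← eCount_lin_chain (delOrder O x) m]
    apply eCount_congr _ _ (hybDelXEquiv m x)
    rintro ⟨(a | i), hc⟩ ⟨(a' | j), hd⟩
    · exact Iff.rfl
    · exact Iff.rfl
    · exact iff_of_true (fun hle => hd (congrArg Sum.inl (hx a' hle))) trivial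
    · exact Iff.rfl
  refine ⟨hminl b, ?_, hdelx b, by simp, ?_⟩
  · -- the count
    induction b with
    | zero =>
      rw [eCount_congr _ O (Equiv.sumEmpty α (Fin 0)) ?_]
      · simp
      · rintro (a | i) (c | j)
        · exact Iff.rfl
        · exact j.elim0
        · exact i.elim0
        · exact i.elim0
    | succ m ih =>
      have hminr : isMinimal
          (hybOrder O (inferInstance : PartialOrder (Fin (m + 1))) x) (Sum.inr 0) := by
        rintro (a | c) h
        · exact h.elim
        · exact congrArg Sum.inr (le_antisymm h (Fin.zero_le c))
      have hdi : ∀ c : α ⊕ Fin (m + 1),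
          (hybOrder O (inferInstance : PartialOrder (Fin (m + 1))) x).le (Sum.inl x) c ∨
          (hybOrder O (inferInstance : PartialOrder (Fin (m + 1))) x).le (Sum.inr 0) c := by
        rintro (a | c)
        · by_cases ha : a = x
          · subst ha; exact Or.inl (O.le_refl a)
          · exact Or.inr (fun hle => ha (hx a hle))
        · exact Or.inr (Fin.zero_le c)
      rw [eCount_eq_eDel_add_eDel _ (Sum.inl x) (Sum.inr 0) (by simp) (hminl (m + 1))
        hminr hdi, hdelx (m + 1)]
      have hrem : eDel (α ⊕ Fin (m + 1))
          (hybOrder O (inferInstance : PartialOrder (Fin (m + 1))) x) (Sum.inr 0) =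
          eCount (α ⊕ Fin m) (hybOrder O (inferInstance : PartialOrder (Fin m)) x) := by
        unfold eDel
        apply eCount_congr _ _ (hybDelBotEquiv m x)
        rintro ⟨(a | i), hc⟩ ⟨(a' | j), hd⟩
        · exact Iff.rfl
        · exact Iff.rfl
        · exact Iff.rfl
        · simp only [hybDelBotEquiv, Equiv.coe_fn_mk]
          exact Fin.pred_le_pred_iff.symm
      rw [hrem, ih]
      ring
  · -- the width
    apply csSup_le
    · exact ⟨0, ∅, by simp, rfl⟩
    · rintro n ⟨s, hs, rfl⟩
      by_cases hR : ∃ i : Fin b, Sum.inr i ∈ s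
      · obtain ⟨i₀, hi₀⟩ := hR
        have key : ∀ c ∈ s, c = Sum.inl x ∨ c = Sum.inr i₀ := by
          rintro (a | j) hc
          · left
            by_contra hax
            have hax' : a ≠ x := fun e => hax (congrArg _ e)
            exact hs _ hi₀ _ hc (by simp) (fun hle => hax' (hx a hle))
          · right
            by_contra hji
            have hne : (Sum.inr j : α ⊕ Fin b) ≠ Sum.inr i₀ := hji
            rcases le_total j i₀ with h | h
            · exact hs _ hc _ hi₀ hne h
            · exact hs _ hi₀ _ hc (Ne.symm hne) h
        have hsub : s ⊆ {Sum.inl x, Sum.inr i₀} := by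
          intro c hc
          rcases key c hc with h | h <;> simp [h]
        have h2 : s.card ≤ 2 := by
          refine (Finset.card_le_card hsub).trans ?_
          exact (Finset.card_insert_le _ _).trans (by simp)
        exact le_max_of_le_right h2
      · push_neg at hR
        set t := s.image (fun c => Sum.elim id (fun _ => x) c) with ht
        have hinj : Set.InjOn (fun c => Sum.elim id (fun _ => x) c) (s : Set (α ⊕ Fin b)) := by
          rintro (a | i) ha (a' | i') ha' h
          · simpa using h
          · exact absurd (Finset.mem_coe.mp ha') (hR i')
          · exact absurd (Finset.mem_coe.mp ha) (hR i)
          · exact absurd (Finset.mem_coe.mp ha) (hR i)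
        have hcard : t.card = s.card := Finset.card_image_of_injOn hinj
        have hmem : ∀ a ∈ t, Sum.inl a ∈ s := by
          intro a ha
          rw [ht, Finset.mem_image] at ha
          obtain ⟨c, hc, hce⟩ := ha
          rcases c with a' | i
          · simp only [Sum.elim_inl, id] at hce
            rwa [← hce]
          · exact absurd hc (hR i)
        have hanti : ∀ a ∈ t, ∀ c ∈ t, a ≠ c → ¬ O.le a c := by
          intro a ha c hc hac
          exact hs _ (hmem a ha) _ (hmem c hc) (fun e => hac (Sum.inl.inj e))
        have hle : t.card ≤ pwidth α O := by
          apply le_csSup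
          · refine ⟨Fintype.card α, ?_⟩
            rintro n ⟨u, _, rfl⟩
            exact u.card_le_univ
          · exact ⟨t, hanti, rfl⟩
        rw [← hcard]
        exact le_max_of_le_left hle
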